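/- (Corollary 2.) Let A_j = A_i ∪ {j} with j ∉ A_i, both G_{A_i} and G_{A_j} of full row rank, and set c_i = c_j, v_i = v_j, d̃_i = −d̃_j, f_i = −f_j. Then for every θ ∈ ℝⁿ, the conditions G z_{A_i}(θ) ≤ b + Sθ and λ_{A_i}(θ) ≥ 0 hold if and only if: (i) for every row index k ∉ A_i: G_k (z_{A_j}(θ)) + (G f_i)_k (c_i + v_iᵀθ) ≤ b_k + S_k θ, and (ii) for every index k ∈ A_i: λ̃_{A_j}(θ)_k − (d̃_i)_k (c_i + v_iᵀθ) ≥ 0; moreover G_{A_i} f_i = 0, so (G f_i)_k = 0 for all k ∈ A_i. -/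

import Mathlib

open Matrix

noncomputable section
namespace MpQP

/-- Submatrix of the rows of `G` indexed by the finite index set `A`. -/
def subRows {nc p : ℕ} (G : Matrix (Fin nc) (Fin p) ℝ) (A : Finset (Fin nc)) :
    Matrix A (Fin p) ℝ := Matrix.of fun i k => G i.val k

/-- Subvector of `b` indexed by `A`. -/
def subVec {nc : ℕ} (b : Fin nc → ℝ) (A : Finset (Fin nc)) : A → ℝ := fun i => b i.val

/-- `G_A` has full row rank, i.e. the rows of `G` indexed by `A` are linearly independent. -/
def FullRowRank {nc m : ℕ} (G : Matrix (Fin nc) (Fin m) ℝ) (A : Finset (Fin nc)) : Prop :=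
  LinearIndependent ℝ (fun i : A => G i.val)

/-- The parametric dual solution `λ_A(θ) = −(G_A H⁻¹ G_Aᵀ)⁻¹ (b_A + S_A θ)`. -/
def lamOf {m n nc : ℕ} (H : Matrix (Fin m) (Fin m) ℝ) (G : Matrix (Fin nc) (Fin m) ℝ)
    (b : Fin nc → ℝ) (S : Matrix (Fin nc) (Fin n) ℝ) (A : Finset (Fin nc))
    (θ : Fin n → ℝ) : A → ℝ :=
  -((subRows G A * H⁻¹ * (subRows G A)ᵀ)⁻¹.mulVec
      (fun i => b i.val + S.mulVec θ i.val))

/-- The parametric primal solution `z_A(θ) = −H⁻¹ G_Aᵀ λ_A(θ)`. -/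
def zOf {m n nc : ℕ} (H : Matrix (Fin m) (Fin m) ℝ) (G : Matrix (Fin nc) (Fin m) ℝ)
    (b : Fin nc → ℝ) (S : Matrix (Fin nc) (Fin n) ℝ) (A : Finset (Fin nc))
    (θ : Fin n → ℝ) : Fin m → ℝ :=
  -((H⁻¹ * (subRows G A)ᵀ).mulVec (lamOf H G b S A θ))

/-- `λ̃_A(θ) ∈ ℝ^{n_c}`: the dual solution extended by zeros outside `A`. -/
def lamExt {m n nc : ℕ} (H : Matrix (Fin m) (Fin m) ℝ) (G : Matrix (Fin nc) (Fin m) ℝ)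
    (b : Fin nc → ℝ) (S : Matrix (Fin nc) (Fin n) ℝ) (A : Finset (Fin nc))
    (θ : Fin n → ℝ) : Fin nc → ℝ :=
  fun k => if h : k ∈ A then lamOf H G b S A θ ⟨k, h⟩ else 0

/-- `W = G_A H⁻¹ G_Aᵀ`. -/
def Wmat {m nc : ℕ} (H : Matrix (Fin m) (Fin m) ℝ) (G : Matrix (Fin nc) (Fin m) ℝ)
    (A : Finset (Fin nc)) : Matrix A A ℝ :=
  subRows G A * H⁻¹ * (subRows G A)ᵀ

/-- `w = G_A H⁻¹ G_jᵀ`. -/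
def wvec {m nc : ℕ} (H : Matrix (Fin m) (Fin m) ℝ) (G : Matrix (Fin nc) (Fin m) ℝ)
    (A : Finset (Fin nc)) (j : Fin nc) : A → ℝ :=
  (subRows G A * H⁻¹).mulVec (G j)

/-- `w₀ = G_j H⁻¹ G_jᵀ`. -/
def w0 {m nc : ℕ} (H : Matrix (Fin m) (Fin m) ℝ) (G : Matrix (Fin nc) (Fin m) ℝ)
    (j : Fin nc) : ℝ :=
  G j ⬝ᵥ H⁻¹.mulVec (G j)

/-- The Schur complement `C = w₀ − wᵀ W⁻¹ w`. -/
def Cval {m nc : ℕ} (H : Matrix (Fin m) (Fin m) ℝ) (G : Matrix (Fin nc) (Fin m) ℝ)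
    (A : Finset (Fin nc)) (j : Fin nc) : ℝ :=
  w0 H G j - wvec H G A j ⬝ᵥ (Wmat H G A)⁻¹.mulVec (wvec H G A j)

/-- `c_j = C⁻¹ (wᵀ W⁻¹ b_A − b_j)`. -/
def cVal {m nc : ℕ} (H : Matrix (Fin m) (Fin m) ℝ) (G : Matrix (Fin nc) (Fin m) ℝ)
    (b : Fin nc → ℝ) (A : Finset (Fin nc)) (j : Fin nc) : ℝ :=
  (Cval H G A j)⁻¹ * (wvec H G A j ⬝ᵥ (Wmat H G A)⁻¹.mulVec (subVec b A) - b j)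

/-- `v_j = C⁻¹ (S_Aᵀ W⁻¹ w − S_jᵀ)`. -/
def vVec {m n nc : ℕ} (H : Matrix (Fin m) (Fin m) ℝ) (G : Matrix (Fin nc) (Fin m) ℝ)
    (S : Matrix (Fin nc) (Fin n) ℝ) (A : Finset (Fin nc)) (j : Fin nc) : Fin n → ℝ :=
  (Cval H G A j)⁻¹ •
    ((subRows S A)ᵀ.mulVec ((Wmat H G A)⁻¹.mulVec (wvec H G A j)) - S j)

/-- `d̃_j ∈ ℝ^{n_c}`: equal to `W⁻¹ w` on `A`, to `−1` at index `j`, and `0` elsewhere. -/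
def dExt {m nc : ℕ} (H : Matrix (Fin m) (Fin m) ℝ) (G : Matrix (Fin nc) (Fin m) ℝ)
    (A : Finset (Fin nc)) (j : Fin nc) : Fin nc → ℝ :=
  fun k =>
    if h : k ∈ A then (Wmat H G A)⁻¹.mulVec (wvec H G A j) ⟨k, h⟩
    else if k = j then -1 else 0

/-- `f_j = H⁻¹ G_{A ∪ {j}}ᵀ (d̃_j restricted to A ∪ {j})`. -/
def fVec {m nc : ℕ} (H : Matrix (Fin m) (Fin m) ℝ) (G : Matrix (Fin nc) (Fin m) ℝ)
    (A : Finset (Fin nc)) (j : Fin nc) : Fin m → ℝ :=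
  (H⁻¹ * (subRows G (insert j A))ᵀ).mulVec (fun i => dExt H G A j i.val)

/-!
Adding constraint `j` to the active set `A` moves the multipliers along `d̃_j`:
`λ̃_{A ∪ {j}}(θ) = λ̃_A(θ) - (c_j + v_jᵀθ) d̃_j`. Indeed the right-hand side vanishes off `A ∪ {j}`
and solves the defining equations `G_k H⁻¹ Gᵀ λ = -(b_k + S_k θ)` for `k ∈ A ∪ {j}`: for `k ∈ A`
because `z_A` is tight there and `G_A f_j = 0`, for `k = j` because
`C (c_j + v_jᵀθ) = G_j z_A(θ) - b_j - S_j θ` (this needs `C ≠ 0`, which holds as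
`G_{A∪{j}} H⁻¹ G_{A∪{j}}ᵀ` is invertible and sends `d̃_j` to `-C e_j`). Applying `-H⁻¹ Gᵀ` gives
`z_{A ∪ {j}} = z_A + (c_j + v_jᵀθ) f_j`, so the conditions (i), (ii) are the primal and dual
feasibility of `A` rewritten, the rows of `A` in the primal condition holding with equality.
-/

variable {m n nc : ℕ} {H : Matrix (Fin m) (Fin m) ℝ} {G : Matrix (Fin nc) (Fin m) ℝ}
  {A : Finset (Fin nc)}

theorem Wmat_posDef (hH : H.PosDef) (hA : FullRowRank G A) : (Wmat H G A).PosDef := by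
  simpa [Wmat] using hH.inv.mul_mul_conjTranspose_same (B := subRows G A)
    (vecMul_injective_iff.mpr hA)

theorem isUnit_det_Wmat (hH : H.PosDef) (hA : FullRowRank G A) : IsUnit (Wmat H G A).det :=
  (isUnit_iff_isUnit_det _).mp (Wmat_posDef hH hA).isUnit

@[simp]
theorem subRows_mulVec_apply {p : ℕ} (M : Matrix (Fin nc) (Fin p) ℝ) (x : Fin p → ℝ) (i : A) :
    (subRows M A *ᵥ x) i = M i ⬝ᵥ x := rfl

theorem subRows_transpose_mulVec {x : Fin nc → ℝ} (hx : ∀ k ∉ A, x k = 0) :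
    (subRows G A)ᵀ *ᵥ (fun i : A => x i) = x ᵥ* G := by
  ext p
  simp only [mulVec, vecMul, dotProduct, transpose_apply, subRows, of_apply]
  rw [Finset.sum_coe_sort A (fun k => G k p * x k), ← Finset.sum_subset (Finset.subset_univ A)
    (fun k _ hk => by rw [hx k hk, zero_mul])]
  exact Finset.sum_congr rfl fun k _ => mul_comm _ _

theorem Wmat_mulVec {x : Fin nc → ℝ} (hx : ∀ k ∉ A, x k = 0) :
    Wmat H G A *ᵥ (fun i : A => x i) = subRows G A *ᵥ (H⁻¹ *ᵥ (x ᵥ* G)) := by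
  rw [Wmat, ← mulVec_mulVec, ← mulVec_mulVec, subRows_transpose_mulVec hx]

theorem dotProduct_inv_mulVec_subRows_transpose (hH : H.PosDef) (j : Fin nc) (y : A → ℝ) :
    G j ⬝ᵥ H⁻¹ *ᵥ ((subRows G A)ᵀ *ᵥ y) = wvec H G A j ⬝ᵥ y := by
  have hsymm : H⁻¹ᵀ = H⁻¹ := hH.inv.isHermitian.eq
  rw [dotProduct_mulVec, dotProduct_mulVec, vecMul_transpose, ← mulVec_transpose, hsymm, wvec,
    mulVec_mulVec]

section Multipliers

variable {b : Fin nc → ℝ} {S : Matrix (Fin nc) (Fin n) ℝ} {θ : Fin n → ℝ}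

theorem lamExt_of_notMem {k : Fin nc} (hk : k ∉ A) : lamExt H G b S A θ k = 0 := dif_neg hk

theorem lamExt_coe (i : A) : lamExt H G b S A θ i = lamOf H G b S A θ i := dif_pos i.2

theorem zOf_eq : zOf H G b S A θ = -(H⁻¹ *ᵥ (lamExt H G b S A θ ᵥ* G)) := by
  rw [zOf, ← mulVec_mulVec, ← subRows_transpose_mulVec fun k hk => lamExt_of_notMem hk]
  simp only [lamExt_coe]

theorem Wmat_mulVec_lamOf (hW : IsUnit (Wmat H G A).det) :
    Wmat H G A *ᵥ lamOf H G b S A θ = -fun i : A => b i + (S *ᵥ θ) i := by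
  rw [lamOf, ← Wmat, mulVec_neg, mulVec_mulVec, mul_nonsing_inv _ hW, one_mulVec]

theorem subRows_mulVec_zOf (hW : IsUnit (Wmat H G A).det) :
    subRows G A *ᵥ zOf H G b S A θ = fun i : A => b i + (S *ᵥ θ) i := by
  rw [zOf, mulVec_neg, mulVec_mulVec, ← Matrix.mul_assoc, ← Wmat, Wmat_mulVec_lamOf hW, neg_neg]

theorem dotProduct_zOf (hH : H.PosDef) (j : Fin nc) :
    G j ⬝ᵥ zOf H G b S A θ =
      wvec H G A j ⬝ᵥ (Wmat H G A)⁻¹ *ᵥ (subVec b A + subRows S A *ᵥ θ) := by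
  rw [zOf, dotProduct_neg, ← mulVec_mulVec, dotProduct_inv_mulVec_subRows_transpose hH, lamOf,
    dotProduct_neg, neg_neg]
  rfl

theorem lamExt_eq_of_Wmat_mulVec (hW : IsUnit (Wmat H G A).det) {x : Fin nc → ℝ}
    (hx : ∀ k ∉ A, x k = 0)
    (h : Wmat H G A *ᵥ (fun i : A => x i) = -fun i : A => b i + (S *ᵥ θ) i) :
    lamExt H G b S A θ = x := by
  have hres : lamOf H G b S A θ = fun i : A => x i :=
    mulVec_injective_iff_isUnit.mpr ((isUnit_iff_isUnit_det _).mpr hW)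
      (by rw [Wmat_mulVec_lamOf hW, h])
  funext k
  by_cases hk : k ∈ A
  · exact (lamExt_coe ⟨k, hk⟩).trans (congrFun hres ⟨k, hk⟩)
  · rw [lamExt_of_notMem hk, hx k hk]

end Multipliers

section Direction

variable {j : Fin nc}

theorem dExt_of_notMem_insert {k : Fin nc} (hk : k ∉ insert j A) : dExt H G A j k = 0 := by
  rw [Finset.mem_insert, not_or] at hk
  simp [dExt, hk.1, hk.2]

theorem dExt_self (hj : j ∉ A) : dExt H G A j j = -1 := by
  simp [dExt, hj]

theorem fVec_eq : fVec H G A j = H⁻¹ *ᵥ (dExt H G A j ᵥ* G) := by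
  rw [fVec, ← mulVec_mulVec, subRows_transpose_mulVec fun k => dExt_of_notMem_insert]

theorem dExt_vecMul (hj : j ∉ A) :
    dExt H G A j ᵥ* G = (subRows G A)ᵀ *ᵥ ((Wmat H G A)⁻¹ *ᵥ wvec H G A j) - G j := by
  set r : Fin nc → ℝ := dExt H G A j + Pi.single j 1
  have hr : ∀ k ∉ A, r k = 0 := by
    intro k hk
    by_cases hkj : k = j
    · subst hkj; simp [r, dExt_self hk]
    · have hk' : k ∉ insert j A := by simp [hk, hkj]
      simp [r, dExt_of_notMem_insert hk', hkj]
  have hrA : (fun i : A => r i) = (Wmat H G A)⁻¹ *ᵥ wvec H G A j := by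
    funext i
    have hij : (i : Fin nc) ≠ j := fun h => hj (h ▸ i.2)
    simp [r, dExt, hij]
  rw [← hrA, subRows_transpose_mulVec hr, add_vecMul, single_one_vecMul]
  exact (add_sub_cancel_right _ _).symm

theorem subRows_mulVec_fVec (hH : H.PosDef) (hA : FullRowRank G A) (hj : j ∉ A) :
    subRows G A *ᵥ fVec H G A j = 0 := by
  have hW : Wmat H G A *ᵥ ((Wmat H G A)⁻¹ *ᵥ wvec H G A j) = wvec H G A j := by
    rw [mulVec_mulVec, mul_nonsing_inv _ (isUnit_det_Wmat hH hA), one_mulVec]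
  rw [fVec_eq, dExt_vecMul hj, mulVec_sub, mulVec_sub, mulVec_mulVec (G j), ← wvec,
    mulVec_mulVec, mulVec_mulVec, ← Wmat, hW, sub_self]

theorem dotProduct_fVec_self (hH : H.PosDef) (hj : j ∉ A) :
    G j ⬝ᵥ fVec H G A j = -Cval H G A j := by
  rw [fVec_eq, dExt_vecMul hj, mulVec_sub, dotProduct_sub,
    dotProduct_inv_mulVec_subRows_transpose hH, Cval, w0, neg_sub]

end Direction

theorem Cval_ne_zero {j : Fin nc} (hH : H.PosDef) (hA : FullRowRank G A)
    (hAj : FullRowRank G (insert j A)) (hj : j ∉ A) : Cval H G A j ≠ 0 := by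
  intro hC
  have hker : Wmat H G (insert j A) *ᵥ (fun i : ↥(insert j A) => dExt H G A j i) = 0 := by
    rw [Wmat_mulVec fun k => dExt_of_notMem_insert, ← fVec_eq]
    funext k
    rcases Finset.mem_insert.mp k.2 with hk | hk
    · rw [subRows_mulVec_apply, hk, dotProduct_fVec_self hH hj, hC, neg_zero, Pi.zero_apply]
    · exact congrFun (subRows_mulVec_fVec hH hA hj) ⟨k, hk⟩
  have hd := congrFun (eq_zero_of_mulVec_eq_zero (isUnit_det_Wmat hH hAj).ne_zero hker)
    ⟨j, Finset.mem_insert_self j A⟩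
  simp [dExt_self hj] at hd

theorem Cval_mul_cVal_add_vVec_dotProduct {b : Fin nc → ℝ} {S : Matrix (Fin nc) (Fin n) ℝ}
    {θ : Fin n → ℝ} {j : Fin nc} (hH : H.PosDef) (hA : FullRowRank G A)
    (hC : Cval H G A j ≠ 0) :
    Cval H G A j * (cVal H G b A j + vVec H G S A j ⬝ᵥ θ) =
      G j ⬝ᵥ zOf H G b S A θ - (b j + (S *ᵥ θ) j) := by
  have hsymm : ((Wmat H G A)⁻¹)ᵀ = (Wmat H G A)⁻¹ := (Wmat_posDef hH hA).inv.isHermitian.eq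
  have hS : (subRows S A)ᵀ *ᵥ ((Wmat H G A)⁻¹ *ᵥ wvec H G A j) ⬝ᵥ θ =
      wvec H G A j ⬝ᵥ (Wmat H G A)⁻¹ *ᵥ (subRows S A *ᵥ θ) := by
    rw [dotProduct_mulVec (wvec H G A j), ← mulVec_transpose, hsymm, mulVec_transpose,
      ← dotProduct_mulVec]
  rw [dotProduct_zOf hH, cVal, vVec, smul_dotProduct, sub_dotProduct, hS, smul_eq_mul,
    mulVec_add, dotProduct_add]
  field_simp
  simp only [mulVec]
  ring

section Update

variable {b : Fin nc → ℝ} {S : Matrix (Fin nc) (Fin n) ℝ} {θ : Fin n → ℝ} {j : Fin nc}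
  (hH : H.PosDef) (hA : FullRowRank G A) (hAj : FullRowRank G (insert j A)) (hj : j ∉ A)
include hH hA hAj hj

theorem lamExt_insert :
    lamExt H G b S (insert j A) θ =
      lamExt H G b S A θ - (cVal H G b A j + vVec H G S A j ⬝ᵥ θ) • dExt H G A j := by
  set s := cVal H G b A j + vVec H G S A j ⬝ᵥ θ
  have hx : ∀ k ∉ insert j A, (lamExt H G b S A θ - s • dExt H G A j) k = 0 := by
    intro k hk
    rw [Pi.sub_apply, Pi.smul_apply, lamExt_of_notMem fun h => hk (Finset.mem_insert_of_mem h),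
      dExt_of_notMem_insert hk, smul_zero, sub_zero]
  refine lamExt_eq_of_Wmat_mulVec (isUnit_det_Wmat hH hAj) hx ?_
  rw [Wmat_mulVec hx, sub_vecMul, smul_vecMul, mulVec_sub, mulVec_smul, ← fVec_eq,
    ← neg_neg (H⁻¹ *ᵥ _), ← zOf_eq]
  funext k
  simp only [subRows_mulVec_apply, Pi.neg_apply, dotProduct_sub, dotProduct_neg,
    dotProduct_smul, smul_eq_mul]
  rcases Finset.mem_insert.mp k.2 with hk | hk
  · rw [hk, dotProduct_fVec_self hH hj]
    linear_combination Cval_mul_cVal_add_vVec_dotProduct hH hA (Cval_ne_zero hH hA hAj hj)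
  · have hz := congrFun (subRows_mulVec_zOf (b := b) (S := S) (θ := θ) (isUnit_det_Wmat hH hA))
      ⟨k, hk⟩
    have hf := congrFun (subRows_mulVec_fVec hH hA hj) ⟨k, hk⟩
    rw [subRows_mulVec_apply] at hz hf
    rw [hz, hf, Pi.zero_apply, mul_zero, sub_zero]

theorem zOf_insert :
    zOf H G b S (insert j A) θ =
      zOf H G b S A θ + (cVal H G b A j + vVec H G S A j ⬝ᵥ θ) • fVec H G A j := by
  rw [zOf_eq, lamExt_insert hH hA hAj hj, sub_vecMul, smul_vecMul, mulVec_sub, mulVec_smul,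
    ← fVec_eq, zOf_eq (A := A), neg_sub, sub_eq_neg_add]

end Update

/-- Corollary 2: for `A_i = A_j \ {j}` (with `A_j = A_i ∪ {j}`), setting
`c_i = c_j`, `v_i = v_j`, `d̃_i = −d̃_j`, `f_i = −f_j`, the feasibility
conditions `G z_{A_i}(θ) ≤ b + Sθ ∧ λ_{A_i}(θ) ≥ 0` hold iff (i) for every
`k ∉ A_i`: `G_k z_{A_j}(θ) + (G f_i)_k (c_i + v_iᵀθ) ≤ b_k + S_k θ`, and
(ii) for every `k ∈ A_i`: `λ̃_{A_j}(θ)_k − (d̃_i)_k (c_i + v_iᵀθ) ≥ 0`;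
moreover `G_{A_i} f_i = 0`, so `(G f_i)_k = 0` for all `k ∈ A_i`. -/
theorem criticalRegion_remove_constraint
    {m n nc : ℕ} (H : Matrix (Fin m) (Fin m) ℝ) (hH : H.PosDef)
    (G : Matrix (Fin nc) (Fin m) ℝ) (b : Fin nc → ℝ) (S : Matrix (Fin nc) (Fin n) ℝ)
    (Ai : Finset (Fin nc)) (j : Fin nc) (hj : j ∉ Ai)
    (hAi : FullRowRank G Ai) (hAj : FullRowRank G (insert j Ai))
    (ci : ℝ) (hci : ci = cVal H G b Ai j)
    (vi : Fin n → ℝ) (hvi : vi = vVec H G S Ai j)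
    (di : Fin nc → ℝ) (hdi : di = -dExt H G Ai j)
    (fi : Fin m → ℝ) (hfi : fi = -fVec H G Ai j)
    (θ : Fin n → ℝ) :
    ((G.mulVec (zOf H G b S Ai θ) ≤ b + S.mulVec θ ∧
        ∀ i : Ai, 0 ≤ lamOf H G b S Ai θ i) ↔
      ((∀ k, k ∉ Ai →
          G k ⬝ᵥ zOf H G b S (insert j Ai) θ +
              G.mulVec fi k * (ci + vi ⬝ᵥ θ) ≤ b k + S.mulVec θ k) ∧
        (∀ k ∈ Ai,
          0 ≤ lamExt H G b S (insert j Ai) θ k - di k * (ci + vi ⬝ᵥ θ)))) ∧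
    (subRows G Ai).mulVec fi = 0 ∧
    (∀ k ∈ Ai, G.mulVec fi k = 0) := by
  subst hci hvi hdi hfi
  have hGf : subRows G Ai *ᵥ -fVec H G Ai j = 0 := by
    rw [mulVec_neg, subRows_mulVec_fVec hH hAi hj, neg_zero]
  refine ⟨?_, hGf, fun k hk => congrFun hGf ⟨k, hk⟩⟩
  have hprimal : ∀ k, G k ⬝ᵥ zOf H G b S (insert j Ai) θ +
      (G *ᵥ -fVec H G Ai j) k * (cVal H G b Ai j + vVec H G S Ai j ⬝ᵥ θ) =
        (G *ᵥ zOf H G b S Ai θ) k := by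
    intro k
    rw [zOf_insert hH hAi hAj hj, dotProduct_add, dotProduct_smul, smul_eq_mul, mulVec_neg,
      Pi.neg_apply]
    simp only [mulVec]
    ring
  have hdual : ∀ k (hk : k ∈ Ai), lamExt H G b S (insert j Ai) θ k -
      (-dExt H G Ai j) k * (cVal H G b Ai j + vVec H G S Ai j ⬝ᵥ θ) =
        lamOf H G b S Ai θ ⟨k, hk⟩ := by
    intro k hk
    rw [lamExt_insert hH hAi hAj hj, ← lamExt_coe]
    simp only [Pi.sub_apply, Pi.smul_apply, Pi.neg_apply, smul_eq_mul]
    ring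
  have htight := subRows_mulVec_zOf (b := b) (S := S) (θ := θ) (isUnit_det_Wmat hH hAi)
  simp only [hprimal]
  constructor
  · rintro ⟨hz, hl⟩
    exact ⟨fun k _ => hz k, fun k hk => hdual k hk ▸ hl ⟨k, hk⟩⟩
  · rintro ⟨hz, hl⟩
    refine ⟨fun k => ?_, fun i => hdual i i.2 ▸ hl i i.2⟩
    by_cases hk : k ∈ Ai
    · exact (congrFun htight ⟨k, hk⟩).le
    · exact hz k hk

end MpQP
end
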